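/- arXiv:2501.03163 — 2 statements merged into one kernel-verified Lean document; each statement's English description precedes it below -/
import Mathlib

section
/- Let f : ℝ → ℝ be convex and suppose there exists a nonzero direction d ∈ ℝ such that the map s ↦ f(s·d) is bounded above on [0,∞). Then for every x ∈ ℝ, f(x + d) ≤ f(x). -/
open Set Filter Topology

/-!
Write `(1 - t) • x + d = (1 - t) • x + t • (t⁻¹ • d)` for `t ∈ (0, 1]`. Since `t⁻¹ • d` lies on the
ray where `f ≤ M`, convexity gives `f ((1 - t) • x + d) ≤ (1 - t) * f x + t * M`, which tends to
`f x` as `t → 0⁺`. The points `(1 - t) • x + d` tend to `x + d`, so lower semicontinuity (automatic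
for convex functions on `ℝ`) passes the bound to `f (x + d)`.
-/

theorem ConvexOn.apply_add_le_of_bddAbove_ray {E : Type*} [AddCommGroup E] [Module ℝ E]
    [TopologicalSpace E] [ContinuousAdd E] [ContinuousSMul ℝ E] {f : E → ℝ}
    (hf : ConvexOn ℝ univ f) (hf' : LowerSemicontinuous f) {d : E} {M : ℝ}
    (hM : ∀ s : ℝ, 0 ≤ s → f (s • d) ≤ M) (x : E) : f (x + d) ≤ f x := by
  refine le_of_forall_gt_imp_ge_of_dense fun c hc => ?_
  have hconv : ∀ t ∈ Ioc (0 : ℝ) 1, f ((1 - t) • x + d) ≤ (1 - t) * f x + t * M := by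
    rintro t ⟨ht₀, ht₁⟩
    have key := hf.2 (mem_univ x) (mem_univ (t⁻¹ • d)) (sub_nonneg.2 ht₁) ht₀.le (by ring)
    rw [smul_smul, mul_inv_cancel₀ ht₀.ne', one_smul] at key
    have hray := mul_le_mul_of_nonneg_left (hM t⁻¹ (inv_nonneg.2 ht₀.le)) ht₀.le
    simp only [smul_eq_mul] at key
    linarith
  have hbound : Tendsto (fun t : ℝ => (1 - t) * f x + t * M) (𝓝[>] 0) (𝓝 (f x)) := by
    have : Continuous fun t : ℝ => (1 - t) * f x + t * M := by fun_prop
    simpa using this.continuousWithinAt.tendsto (x := 0) (s := Ioi 0)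
  have hpath : Tendsto (fun t : ℝ => (1 - t) • x + d) (𝓝[>] 0) (𝓝 (x + d)) := by
    have : Continuous fun t : ℝ => (1 - t) • x + d := by fun_prop
    simpa using this.continuousWithinAt.tendsto (x := 0) (s := Ioi 0)
  refine (hf'.isClosed_preimage c).mem_of_tendsto hpath ?_
  filter_upwards [hbound.eventually (gt_mem_nhds hc), Ioc_mem_nhdsGT zero_lt_one]
    with t hlt ht using (hconv t ht).trans hlt.le

theorem convex_bounded_ray_dir_nonincreasing_general
    (f : ℝ → ℝ) (hf : ConvexOn ℝ Set.univ f)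
    (d : ℝ)
    (M : ℝ) (hM : ∀ s : ℝ, 0 ≤ s → f (s * d) ≤ M) :
    ∀ x : ℝ, f (x + d) ≤ f x :=
  have hcont : Continuous f := continuousOn_univ.1 (hf.continuousOn isOpen_univ)
  hf.apply_add_le_of_bddAbove_ray hcont.lowerSemicontinuous hM

theorem convex_bounded_ray_dir_nonincreasing
    (f : ℝ → ℝ) (hf : ConvexOn ℝ Set.univ f)
    (d : ℝ) (hd : d ≠ 0)
    (M : ℝ) (hM : ∀ s : ℝ, 0 ≤ s → f (s * d) ≤ M) :
    ∀ x : ℝ, f (x + d) ≤ f x :=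
  convex_bounded_ray_dir_nonincreasing_general f hf d M hM
end

section
/- Let f : ℝ → ℝ be a proper closed convex function with f(0) = 0, and for t > 0 let v_t = prox_{tf}(tG) for a fixed real number G. Then the function t ↦ (v_t/t)² is non-increasing in t on (0, ∞). -/
/-!
The minimality of `a` against the points of the segment from `a` to `u`, combined with convexity
of `f` along that segment, gives in the limit the variational inequality of the proximal map,
`⟪u - a, x - a⟫ ≤ s (f u - f a)`. Applying it to `a = prox_{sf}(sG)` and `b = prox_{tf}(tG)`
against each other and adding yields `⟪t q - s p, q - p⟫ ≤ 0` for `p = a / s`, `q = b / t`;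
for `s < t` this forces both `⟪p, q - p⟫ ≤ 0` and `⟪q, q - p⟫ ≤ 0`, hence `‖q‖² ≤ ⟪p, q⟫ ≤ ‖p‖²`.
-/

open Set Filter Topology
open scoped RealInnerProductSpace

variable {E : Type*} [NormedAddCommGroup E] [InnerProductSpace ℝ E] {f : E → ℝ}

theorem ConvexOn.inner_sub_le_of_isMinOn_prox (hf : ConvexOn ℝ univ f) {s : ℝ} (hs : 0 < s)
    {x a : E} (ha : IsMinOn (fun u => ‖x - u‖ ^ 2 / (2 * s) + f u) univ a) (u : E) :
    ⟪u - a, x - a⟫ ≤ s * (f u - f a) := by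
  have step : ∀ l ∈ Ioo (0 : ℝ) 1,
      ⟪u - a, x - a⟫ ≤ s * (f u - f a) + l * (‖u - a‖ ^ 2 / 2) := by
    rintro l ⟨hl0, hl1⟩
    have hmin := ha (mem_univ ((1 - l) • a + l • u))
    have hconv : f ((1 - l) • a + l • u) ≤ (1 - l) * f a + l * f u :=
      hf.2 (mem_univ a) (mem_univ u) (by linarith) hl0.le (by ring)
    have hnorm : ‖x - ((1 - l) • a + l • u)‖ ^ 2
        = ‖x - a‖ ^ 2 - 2 * l * ⟪u - a, x - a⟫ + l ^ 2 * ‖u - a‖ ^ 2 := by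
      rw [show x - ((1 - l) • a + l • u) = (x - a) - l • (u - a) by module, norm_sub_sq_real,
        inner_smul_right, norm_smul, real_inner_comm, Real.norm_eq_abs, abs_of_pos hl0]
      ring
    simp only [mem_ofPred_eq, hnorm] at hmin
    have key : 2 * l * ⟪u - a, x - a⟫ ≤ 2 * l * (s * (f u - f a) + l * (‖u - a‖ ^ 2 / 2)) := by
      have h2s := mul_le_mul_of_nonneg_left hmin (by positivity : (0 : ℝ) ≤ 2 * s)
      field_simp at h2s
      linarith [mul_le_mul_of_nonneg_left hconv (by positivity : (0 : ℝ) ≤ 2 * s)]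
    exact le_of_mul_le_mul_left key (by positivity)
  have hlim : Tendsto (fun l : ℝ => s * (f u - f a) + l * (‖u - a‖ ^ 2 / 2)) (𝓝[>] 0)
      (𝓝 (s * (f u - f a))) := by
    refine tendsto_nhdsWithin_of_tendsto_nhds ?_
    simpa using ((continuous_id.mul continuous_const).const_add (s * (f u - f a))).tendsto (0 : ℝ)
  exact ge_of_tendsto hlim (eventually_of_mem (Ioo_mem_nhdsGT one_pos) step)

theorem ConvexOn.inner_sub_smul_sub_smul_nonpos (hf : ConvexOn ℝ univ f) {s t : ℝ} (hs : 0 < s)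
    (ht : 0 < t) {G a b : E}
    (ha : IsMinOn (fun u => ‖s • G - u‖ ^ 2 / (2 * s) + f u) univ a)
    (hb : IsMinOn (fun u => ‖t • G - u‖ ^ 2 / (2 * t) + f u) univ b) :
    ⟪b - a, s • b - t • a⟫ ≤ 0 := by
  have hab := hf.inner_sub_le_of_isMinOn_prox hs ha b
  have hba := hf.inner_sub_le_of_isMinOn_prox ht hb a
  rw [← neg_sub b a, inner_neg_left] at hba
  have e : ⟪b - a, s • b - t • a⟫ = t * ⟪b - a, s • G - a⟫ - s * ⟪b - a, t • G - b⟫ := by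
    rw [show s • b - t • a = t • (s • G - a) - s • (t • G - b) by module, inner_sub_right,
      inner_smul_right, inner_smul_right]
  rw [e]
  nlinarith [mul_le_mul_of_nonneg_left hab ht.le, mul_le_mul_of_nonneg_left hba hs.le]

theorem norm_le_of_inner_smul_sub_smul_nonpos {p q : E} {s t : ℝ} (hs : 0 ≤ s) (hst : s < t)
    (h : ⟪t • q - s • p, q - p⟫ ≤ 0) : ‖q‖ ≤ ‖p‖ := by
  have hp : ⟪p, q - p⟫ ≤ 0 := by
    have e : ⟪t • q - s • p, q - p⟫ = t * ‖q - p‖ ^ 2 + (t - s) * ⟪p, q - p⟫ := by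
      rw [show t • q - s • p = t • (q - p) + (t - s) • p by module, inner_add_left,
        inner_smul_left, inner_smul_left, real_inner_self_eq_norm_sq]
      simp
    nlinarith [sq_nonneg ‖q - p‖]
  have hq : ⟪q, q - p⟫ ≤ 0 := by
    have e : ⟪t • q - s • p, q - p⟫ = s * ‖q - p‖ ^ 2 + (t - s) * ⟪q, q - p⟫ := by
      rw [show t • q - s • p = s • (q - p) + (t - s) • q by module, inner_add_left,
        inner_smul_left, inner_smul_left, real_inner_self_eq_norm_sq]
      simp
    nlinarith [sq_nonneg ‖q - p‖]
  rw [inner_sub_right, real_inner_self_eq_norm_sq] at hp hq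
  rw [real_inner_comm] at hp
  exact pow_le_pow_iff_left₀ (norm_nonneg q) (norm_nonneg p) two_ne_zero |>.mp (by linarith)

theorem ConvexOn.antitoneOn_norm_inv_smul_prox (hf : ConvexOn ℝ univ f) (G : E) {v : ℝ → E}
    (hv : ∀ t : ℝ, 0 < t → IsMinOn (fun u => ‖t • G - u‖ ^ 2 / (2 * t) + f u) univ (v t)) :
    AntitoneOn (fun t => ‖t⁻¹ • v t‖) (Ioi 0) := by
  intro s (hs : 0 < s) t (ht : 0 < t) hst
  obtain rfl | hlt := hst.eq_or_lt
  · rfl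
  have h := hf.inner_sub_smul_sub_smul_nonpos hs ht (hv s hs) (hv t ht)
  rw [← smul_inv_smul₀ hs.ne' (v s), ← smul_inv_smul₀ ht.ne' (v t),
    show ∀ p q : E, s • t • q - t • s • p = (s * t) • (q - p) by intro p q; module,
    inner_smul_right] at h
  exact norm_le_of_inner_smul_sub_smul_nonpos hs.le hlt
    (nonpos_of_mul_nonpos_right h (mul_pos hs ht))

theorem prox_ratio_sq_antitone_general
    (f : ℝ → ℝ) (hf : ConvexOn ℝ Set.univ f)
    (G : ℝ) (v : ℝ → ℝ)
    (hv : ∀ t : ℝ, 0 < t →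
      IsMinOn (fun u : ℝ => (t * G - u) ^ 2 / (2 * t) + f u) Set.univ (v t)) :
    AntitoneOn (fun t : ℝ => (v t / t) ^ 2) (Set.Ioi 0) := by
  have hv' : ∀ t : ℝ, 0 < t → IsMinOn (fun u => ‖t • G - u‖ ^ 2 / (2 * t) + f u) univ (v t) := by
    simpa only [smul_eq_mul, Real.norm_eq_abs, sq_abs] using hv
  intro s hs t ht hst
  have h := hf.antitoneOn_norm_inv_smul_prox G hv' hs ht hst
  simp only [smul_eq_mul, Real.norm_eq_abs] at h
  simpa only [div_eq_inv_mul, sq_le_sq] using h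

theorem prox_ratio_sq_antitone
    (f : ℝ → ℝ) (hf : ConvexOn ℝ Set.univ f) (hlsc : LowerSemicontinuous f)
    (hf0 : f 0 = 0) (G : ℝ) (v : ℝ → ℝ)
    (hv : ∀ t : ℝ, 0 < t →
      IsMinOn (fun u : ℝ => (t * G - u) ^ 2 / (2 * t) + f u) Set.univ (v t)) :
    AntitoneOn (fun t : ℝ => (v t / t) ^ 2) (Set.Ioi 0) :=
  prox_ratio_sq_antitone_general f hf G v hv
end
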